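/- arXiv:1404.7192 — 2 statements merged into one kernel-verified Lean document; each statement's English description precedes it below -/
import Mathlib

section
/- Let ϖ₁, ϖ₂ ∈ F satisfy 0 < |ϖ₁| ≤ |ϖ₂| < 1, let I = [|ϖ₁|, |ϖ₂|] ⊆ (0,1), and let B^{b,∘}_I = {x ∈ B^b : |x|_I ≤ 1}. Then the topology induced on B^{b,∘}_I by the norm |·|_I coincides with the p-adic topology: (i) for every natural number k there exists ε > 0 such that every x ∈ B^{b,∘}_I with |x|_I ≤ ε lies in p^k · B^{b,∘}_I, and (ii) for every ε > 0 there exists a natural number k such that every element of p^k · B^{b,∘}_I has |·|_I-norm at most ε. -/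
open scoped NNReal

/-- The `n`-th coefficient of the Teichmüller expansion `x = Σ [xₙ] pⁿ` of a `p`-typical
Witt vector over a perfect field of characteristic `p`. -/
noncomputable def teichCoeff (p : ℕ) [Fact p.Prime] (F : Type*) [Field F] [CharP F p]
    [PerfectRing F p] (x : WittVector p F) (n : ℕ) : F :=
  (⇑(frobeniusEquiv F p).symm)^[n] (x.coeff n)

/-- The set of elements of `B^b ⊆ W(F)[1/p]` (realized inside the fraction field of `W(F)`)
whose `I`-Gauss norm is at most `ε`, where `I = [|ϖ₁|, |ϖ₂|]`.  An element of `B^b` is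
`y = x/p^k` with `x ∈ W(F)` having bounded Teichmüller coefficients `xₙ`, and `|y|_I ≤ ε`
means `|xₙ| ρ^n ≤ ε ρ^k` for all `ρ ∈ I` and all `n`. -/
def gaussBallI (p : ℕ) [Fact p.Prime] (F : Type*) [Field F] [CharP F p] [PerfectRing F p]
    (v : Valuation F ℝ≥0) (ϖ₁ ϖ₂ : F) (ε : ℝ≥0) : Set (FractionRing (WittVector p F)) :=
  {y | ∃ (k : ℕ) (x : WittVector p F),
      y = algebraMap (WittVector p F) (FractionRing (WittVector p F)) x /
            (p : FractionRing (WittVector p F)) ^ k ∧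
      (∃ C : ℝ≥0, ∀ n : ℕ, v (teichCoeff p F x n) ≤ C) ∧
      (∀ ρ ∈ Set.Icc (v ϖ₁) (v ϖ₂), ∀ n : ℕ, v (teichCoeff p F x n) * ρ ^ n ≤ ε * ρ ^ k)}

/-! Multiplication by `p` shifts the Teichmüller expansion, `Σ [xₙ] pⁿ ↦ Σ [xₙ] pⁿ⁺¹`, hence
multiplies `|·|_ρ` by `ρ`. As `ρ` ranges over `I = [|ϖ₁|, |ϖ₂|]`, an element with `|y|_I ≤ |ϖ₁|^k`
is therefore `p^k` times an element of the unit ball, and `|p^k z|_I ≤ |ϖ₂|^k |z|_I`. -/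

namespace WittVector

variable {p : ℕ} [Fact p.Prime] {F : Type*} [Field F] [CharP F p] [PerfectRing F p]

lemma teichCoeff_mul_p_succ (x : WittVector p F) (n : ℕ) :
    teichCoeff p F (x * p) (n + 1) = teichCoeff p F x n := by
  unfold teichCoeff
  rw [← verschiebung_frobenius, verschiebung_coeff_succ, coeff_frobenius_charP,
    Function.iterate_succ_apply, _root_.frobeniusEquiv_symm_pow]

lemma teichCoeff_mul_p_zero (x : WittVector p F) : teichCoeff p F (x * p) 0 = 0 := by
  rw [teichCoeff, ← verschiebung_frobenius, verschiebung_coeff_zero, Function.iterate_zero_apply]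

lemma teichCoeff_mul_p_pow_add (x : WittVector p F) (k n : ℕ) :
    teichCoeff p F (x * p ^ k) (n + k) = teichCoeff p F x n := by
  induction k with
  | zero => simp
  | succ k ih => rw [pow_succ, ← mul_assoc, ← Nat.add_assoc, teichCoeff_mul_p_succ, ih]

lemma teichCoeff_mul_p_pow_of_lt (x : WittVector p F) {k n : ℕ} (h : n < k) :
    teichCoeff p F (x * p ^ k) n = 0 := by
  induction k generalizing n with
  | zero => omega
  | succ k ih =>
    rw [pow_succ, ← mul_assoc]
    cases n with
    | zero => exact teichCoeff_mul_p_zero _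
    | succ m => rw [teichCoeff_mul_p_succ]; exact ih (by omega)

/-- At `ρ = 1` this is the boundedness of the Teichmüller coefficients. -/
lemma valuation_teichCoeff_mul_p_pow_mul_le (v : Valuation F ℝ≥0) {x : WittVector p F}
    {ρ c : ℝ≥0} (h : ∀ m, v (teichCoeff p F x m) * ρ ^ m ≤ c) (k n : ℕ) :
    v (teichCoeff p F (x * p ^ k) n) * ρ ^ n ≤ c * ρ ^ k := by
  rcases lt_or_ge n k with hnk | hkn
  · simp [teichCoeff_mul_p_pow_of_lt x hnk]
  · obtain ⟨m, rfl⟩ := Nat.exists_eq_add_of_le' hkn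
    rw [teichCoeff_mul_p_pow_add, pow_add, ← mul_assoc]
    exact mul_le_mul_left (h m) _

end WittVector

section gaussBallI

open WittVector

variable {p : ℕ} [Fact p.Prime] {F : Type*} [Field F] [CharP F p] [PerfectRing F p]
  {v : Valuation F ℝ≥0} {ϖ₁ ϖ₂ : F}

lemma gaussBallI_mono {ε ε' : ℝ≥0} (h : ε ≤ ε') :
    gaussBallI p F v ϖ₁ ϖ₂ ε ⊆ gaussBallI p F v ϖ₁ ϖ₂ ε' := by
  rintro y ⟨k, x, rfl, hC, hb⟩
  exact ⟨k, x, rfl, hC, fun ρ hρ n => (hb ρ hρ n).trans (by gcongr)⟩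

lemma exists_eq_p_pow_mul_of_mem_gaussBallI {k : ℕ} {ε : ℝ≥0} {y : FractionRing (WittVector p F)}
    (hy : y ∈ gaussBallI p F v ϖ₁ ϖ₂ (v ϖ₁ ^ k * ε)) :
    ∃ z ∈ gaussBallI p F v ϖ₁ ϖ₂ ε, y = (p : FractionRing (WittVector p F)) ^ k * z := by
  obtain ⟨j, x, rfl, hC, hb⟩ := hy
  refine ⟨algebraMap _ _ x / (p : FractionRing (WittVector p F)) ^ (k + j),
    ⟨k + j, x, rfl, hC, fun ρ hρ n => ?_⟩, ?_⟩
  · calc v (teichCoeff p F x n) * ρ ^ n ≤ v ϖ₁ ^ k * ε * ρ ^ j := hb ρ hρ n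
      _ ≤ ρ ^ k * ε * ρ ^ j := by gcongr; exact hρ.1
      _ = ε * ρ ^ (k + j) := by ring
  · have hp : (p : FractionRing (WittVector p F)) ≠ 0 := by
      simpa using (IsFractionRing.injective (WittVector p F) (FractionRing (WittVector p F))).ne
        (p_nonzero p F)
    rw [pow_add]
    field_simp

lemma p_pow_mul_mem_gaussBallI {k : ℕ} {ε : ℝ≥0} {z : FractionRing (WittVector p F)}
    (hz : z ∈ gaussBallI p F v ϖ₁ ϖ₂ ε) :
    (p : FractionRing (WittVector p F)) ^ k * z ∈ gaussBallI p F v ϖ₁ ϖ₂ (v ϖ₂ ^ k * ε) := by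
  obtain ⟨j, x, rfl, ⟨C, hC⟩, hb⟩ := hz
  refine ⟨j, x * (p : WittVector p F) ^ k, by simp [mul_div_assoc', mul_comm], ⟨C, fun n => ?_⟩,
    fun ρ hρ n => ?_⟩
  · simpa using valuation_teichCoeff_mul_p_pow_mul_le v (ρ := 1) (by simpa using hC) k n
  · calc v (teichCoeff p F (x * p ^ k) n) * ρ ^ n ≤ ε * ρ ^ j * ρ ^ k :=
          valuation_teichCoeff_mul_p_pow_mul_le v (hb ρ hρ) k n
      _ ≤ ε * ρ ^ j * v ϖ₂ ^ k := by gcongr; exact hρ.2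
      _ = v ϖ₂ ^ k * ε * ρ ^ j := by ring

end gaussBallI

theorem gaussNormI_topology_eq_padic_general {p : ℕ} [Fact p.Prime] {F : Type*} [Field F] [CharP F p]
    [PerfectRing F p] (v : Valuation F ℝ≥0)
    (ϖ₁ ϖ₂ : F) (hϖ₁ : 0 < v ϖ₁) (hϖ₂ : v ϖ₂ < 1) :
    (∀ k : ℕ, ∃ ε : ℝ≥0, 0 < ε ∧
      ∀ y ∈ gaussBallI p F v ϖ₁ ϖ₂ 1, y ∈ gaussBallI p F v ϖ₁ ϖ₂ ε →
        ∃ z ∈ gaussBallI p F v ϖ₁ ϖ₂ 1,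
          y = (p : FractionRing (WittVector p F)) ^ k * z) ∧
    (∀ ε : ℝ≥0, 0 < ε → ∃ k : ℕ,
      ∀ z ∈ gaussBallI p F v ϖ₁ ϖ₂ 1,
        (p : FractionRing (WittVector p F)) ^ k * z ∈ gaussBallI p F v ϖ₁ ϖ₂ ε) := by
  refine ⟨fun k => ⟨v ϖ₁ ^ k, pow_pos hϖ₁ k, fun y _ hy => ?_⟩, fun ε hε => ?_⟩
  · exact exists_eq_p_pow_mul_of_mem_gaussBallI (by rwa [mul_one])
  · obtain ⟨k, hk⟩ := NNReal.exists_pow_lt_of_lt_one hε hϖ₂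
    exact ⟨k, fun z hz => gaussBallI_mono (by rw [mul_one]; exact hk.le)
      (p_pow_mul_mem_gaussBallI hz)⟩

/-- On `B^{b,∘}_I = {x ∈ B^b : |x|_I ≤ 1}`, the topology induced by the
norm `|·|_I` coincides with the `p`-adic topology:
(i) for every `k` there is `ε > 0` such that every `x ∈ B^{b,∘}_I` with `|x|_I ≤ ε`
lies in `p^k · B^{b,∘}_I`, and
(ii) for every `ε > 0` there is `k` such that every element of `p^k · B^{b,∘}_I`
has `|·|_I`-norm at most `ε`. -/
theorem gaussNormI_topology_eq_padic {p : ℕ} [Fact p.Prime] {F : Type*} [Field F] [CharP F p]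
    [PerfectRing F p] (v : Valuation F ℝ≥0)
    (hv : ∃ y : F, v y ≠ 0 ∧ v y ≠ 1)
    (ϖ₁ ϖ₂ : F) (hϖ₁ : 0 < v ϖ₁) (hϖ₁₂ : v ϖ₁ ≤ v ϖ₂) (hϖ₂ : v ϖ₂ < 1) :
    (∀ k : ℕ, ∃ ε : ℝ≥0, 0 < ε ∧
      ∀ y ∈ gaussBallI p F v ϖ₁ ϖ₂ 1, y ∈ gaussBallI p F v ϖ₁ ϖ₂ ε →
        ∃ z ∈ gaussBallI p F v ϖ₁ ϖ₂ 1,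
          y = (p : FractionRing (WittVector p F)) ^ k * z) ∧
    (∀ ε : ℝ≥0, 0 < ε → ∃ k : ℕ,
      ∀ z ∈ gaussBallI p F v ϖ₁ ϖ₂ 1,
        (p : FractionRing (WittVector p F)) ^ k * z ∈ gaussBallI p F v ϖ₁ ϖ₂ ε) :=
  gaussNormI_topology_eq_padic_general v ϖ₁ ϖ₂ hϖ₁ hϖ₂
end

section
/- Fix any ϖ ∈ F with 0 < |ϖ| < 1. Then B^b equals the subring of W(F)[1/p] generated by the image of W(O_F) (under the map of Witt vectors induced by the inclusion O_F ⊆ F) together with the two elements p^{-1} and [ϖ]^{-1} = [ϖ^{-1}]; in other words, B^b = W(O_F)[1/p, 1/[ϖ]], and in particular this subring is independent of the choice of ϖ. -/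
/-!
Multiplication by a Teichmüller representative acts coefficient-wise, `([a] * x)ₙ = a ^ p ^ n * xₙ`
(checked on ghost components over `ℚ`-algebras and transported from the universal case), so
it multiplies every Teichmüller coefficient by `a`. Hence `x` has bounded Teichmüller
coefficients iff `[ϖ ^ m] * x ∈ W(O_F)` for some `m`, i.e. `x / pᵏ ∈ B^b` iff
`[ϖ] ^ m * pᵏ * (x / pᵏ) ∈ W(O_F)`. On the other side, in a field the subring generated by a
subring `A` and `d⁻¹` (with `0 ≠ d ∈ A`) is `{y | ∃ n, dⁿ * y ∈ A}`; applying this to `p` and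
`[ϖ]` gives the same description of `W(O_F)[1/p, 1/[ϖ]]`.
-/

open scoped NNReal

theorem Subring.mem_closure_insert_inv_iff {K : Type*} [Field K] {s : Set K} {d : K}
    (hds : d ∈ closure s) (hd : d ≠ 0) {y : K} :
    y ∈ closure (insert d⁻¹ s) ↔ ∃ n : ℕ, d ^ n * y ∈ closure s := by
  constructor
  · intro hy
    induction hy using closure_induction with
    | mem x hx =>
      rcases hx with rfl | hx
      · exact ⟨1, by rw [pow_one, mul_inv_cancel₀ hd]; exact one_mem _⟩
      · exact ⟨0, by rw [pow_zero, one_mul]; exact subset_closure hx⟩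
    | zero => exact ⟨0, by rw [mul_zero]; exact zero_mem _⟩
    | one => exact ⟨0, by rw [mul_one, pow_zero]; exact one_mem _⟩
    | add x y _ _ hx hy =>
      obtain ⟨m, hm⟩ := hx
      obtain ⟨n, hn⟩ := hy
      refine ⟨m + n, ?_⟩
      have : d ^ (m + n) * (x + y) = d ^ n * (d ^ m * x) + d ^ m * (d ^ n * y) := by ring
      rw [this]
      exact add_mem (mul_mem (pow_mem hds n) hm) (mul_mem (pow_mem hds m) hn)
    | neg x _ hx =>
      obtain ⟨n, hn⟩ := hx
      exact ⟨n, by rw [mul_neg]; exact neg_mem hn⟩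
    | mul x y _ _ hx hy =>
      obtain ⟨m, hm⟩ := hx
      obtain ⟨n, hn⟩ := hy
      refine ⟨m + n, ?_⟩
      rw [show d ^ (m + n) * (x * y) = (d ^ m * x) * (d ^ n * y) by ring]
      exact mul_mem hm hn
  · rintro ⟨n, hn⟩
    have hinv : d⁻¹ ∈ closure (insert d⁻¹ s) := subset_closure (Set.mem_insert _ _)
    rw [← inv_mul_cancel_left₀ (pow_ne_zero n hd) y, ← inv_pow]
    exact mul_mem (pow_mem hinv n) (closure_mono (Set.subset_insert _ _) hn)

namespace WittVector

variable {p : ℕ} [Fact p.Prime] {R : Type*} [CommRing R]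

theorem ghostComponent_mk_pow_mul (a : R) (x : WittVector p R) (n : ℕ) :
    ghostComponent n (mk p fun i => a ^ p ^ i * x.coeff i) = a ^ p ^ n * ghostComponent n x := by
  simp only [ghostComponent_apply, aeval_wittPolynomial, Finset.mul_sum, coeff_mk]
  refine Finset.sum_congr rfl fun i hi => ?_
  have hin : i + (n - i) = n := by have := Finset.mem_range.1 hi; omega
  rw [mul_pow, ← pow_mul, ← pow_add, hin]
  ring

theorem teichmuller_mul_eq_mk_of_invertible [Invertible (p : R)] (a : R) (x : WittVector p R) :
    teichmuller p a * x = mk p fun n => a ^ p ^ n * x.coeff n := by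
  apply (ghostMap.bijective_of_invertible p R).1
  ext n
  simp only [map_mul, ghostMap_apply, ghostComponent_teichmuller, ghostComponent_mk_pow_mul]

theorem map_mk {S : Type*} [CommRing S] (f : R →+* S) (x : ℕ → R) :
    map f (mk p x) = mk p fun n => f (x n) := by
  ext n
  simp [map_coeff]

theorem teichmuller_mul_eq_mk (a : R) (x : WittVector p R) :
    teichmuller p a * x = mk p fun n => a ^ p ^ n * x.coeff n := by
  have universal (a : MvPolynomial R ℤ) (x : WittVector p (MvPolynomial R ℤ)) :
      teichmuller p a * x = mk p fun n => a ^ p ^ n * x.coeff n := by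
    refine map_injective (MvPolynomial.map (Int.castRingHom ℚ))
      (MvPolynomial.map_injective _ Int.cast_injective) ?_
    simp only [map_mul, map_teichmuller, teichmuller_mul_eq_mk_of_invertible, map_mk, map_pow,
      map_coeff]
  obtain ⟨a, rfl⟩ := MvPolynomial.counit_surjective R a
  obtain ⟨x, rfl⟩ := map_surjective _ (MvPolynomial.counit_surjective R) x
  rw [← map_teichmuller, ← map_mul, universal, map_mk]
  simp only [map_mul, map_pow, map_coeff]

theorem teichmuller_mul_coeff (a : R) (x : WittVector p R) (n : ℕ) :
    (teichmuller p a * x).coeff n = a ^ p ^ n * x.coeff n := by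
  rw [teichmuller_mul_eq_mk, coeff_mk]

theorem mem_range_map_subtype_iff (A : Subring R) (x : WittVector p R) :
    x ∈ Set.range (map A.subtype) ↔ ∀ n, x.coeff n ∈ A := by
  constructor
  · rintro ⟨w, rfl⟩ n
    rw [map_coeff]
    exact (w.coeff n).2
  · intro hx
    exact ⟨mk p fun n => ⟨x.coeff n, hx n⟩, by ext n; simp [map_coeff]⟩

end WittVector

section PerfectField

open WittVector

variable {p : ℕ} [hp : Fact p.Prime] {F : Type*} [Field F] [CharP F p] [PerfectRing F p]

theorem teichCoeff_pow (x : WittVector p F) (n : ℕ) : teichCoeff p F x n ^ p ^ n = x.coeff n :=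
  iterate_frobeniusEquiv_symm_pow_p_pow F p _ n

theorem teichCoeff_teichmuller_mul (a : F) (x : WittVector p F) (n : ℕ) :
    teichCoeff p F (teichmuller p a * x) n = a * teichCoeff p F x n := by
  apply iterateFrobenius_inj F p n
  simp only [iterateFrobenius_def, mul_pow, teichCoeff_pow, teichmuller_mul_coeff]

theorem teichCoeff_le_one_iff {Γ₀ : Type*} [LinearOrderedCommGroupWithZero Γ₀]
    (v : Valuation F Γ₀) (x : WittVector p F) (n : ℕ) :
    v (teichCoeff p F x n) ≤ 1 ↔ v (x.coeff n) ≤ 1 := by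
  rw [← teichCoeff_pow, map_pow, pow_le_one_iff (pow_ne_zero n hp.out.ne_zero)]

theorem mem_range_map_integer_iff {Γ₀ : Type*} [LinearOrderedCommGroupWithZero Γ₀]
    (v : Valuation F Γ₀) (x : WittVector p F) :
    x ∈ Set.range (map v.integer.subtype) ↔ ∀ n, v (teichCoeff p F x n) ≤ 1 := by
  simp only [mem_range_map_subtype_iff, Valuation.mem_integer_iff, teichCoeff_le_one_iff]

theorem teichCoeff_teichmuller_mul_le {Γ₀ : Type*} [LinearOrderedCommGroupWithZero Γ₀]
    (v : Valuation F Γ₀) {x : WittVector p F} (hx : x ∈ Set.range (map v.integer.subtype))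
    (a : F) (n : ℕ) : v (teichCoeff p F (teichmuller p a * x) n) ≤ v a := by
  rw [teichCoeff_teichmuller_mul, map_mul]
  exact mul_le_of_le_one_right' ((mem_range_map_integer_iff v x).1 hx n)

theorem exists_teichmuller_pow_mul_mem_range (v : Valuation F ℝ≥0) {ϖ : F} (hϖ : v ϖ < 1)
    {x : WittVector p F} {C : ℝ≥0} (hC : ∀ n, v (teichCoeff p F x n) ≤ C) :
    ∃ m : ℕ, teichmuller p (ϖ ^ m) * x ∈ Set.range (map v.integer.subtype) := by
  have hC1 : 0 < C + 1 := by positivity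
  obtain ⟨m, hm⟩ := exists_pow_lt_of_lt_one (inv_pos.2 hC1) hϖ
  refine ⟨m, (mem_range_map_integer_iff v _).2 fun n => ?_⟩
  rw [teichCoeff_teichmuller_mul, map_mul, map_pow]
  calc v ϖ ^ m * v (teichCoeff p F x n) ≤ (C + 1)⁻¹ * (C + 1) :=
        mul_le_mul' hm.le ((hC n).trans le_self_add)
    _ = 1 := inv_mul_cancel₀ hC1.ne'

theorem exists_bounded_teichCoeff_div_iff (v : Valuation F ℝ≥0) {ϖ : F} (hϖ0 : ϖ ≠ 0)
    (hϖ1 : v ϖ < 1) (y : FractionRing (WittVector p F)) :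
    (∃ (k : ℕ) (x : WittVector p F),
        y = algebraMap _ _ x / (p : FractionRing (WittVector p F)) ^ k ∧
          ∃ C : ℝ≥0, ∀ n, v (teichCoeff p F x n) ≤ C) ↔
      ∃ k m : ℕ, algebraMap _ _ (teichmuller p ϖ) ^ m *
          ((p : FractionRing (WittVector p F)) ^ k * y) ∈
        Set.range ((algebraMap (WittVector p F) _).comp (map v.integer.subtype)) := by
  set ι := algebraMap (WittVector p F) (FractionRing (WittVector p F))
  have hp0 : (p : FractionRing (WittVector p F)) ≠ 0 := FractionRing.p_nonzero p F
  constructor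
  · rintro ⟨k, x, rfl, C, hC⟩
    obtain ⟨m, w, hw⟩ := exists_teichmuller_pow_mul_mem_range v hϖ1 hC
    refine ⟨k, m, w, ?_⟩
    rw [RingHom.comp_apply, hw, mul_div_cancel₀ _ (pow_ne_zero k hp0), map_mul, map_pow, map_pow]
  · rintro ⟨k, m, w, hw⟩
    refine ⟨k, teichmuller p (ϖ ^ m)⁻¹ * map v.integer.subtype w, ?_, v (ϖ ^ m)⁻¹,
      teichCoeff_teichmuller_mul_le v ⟨w, rfl⟩ _⟩
    have hunit : ι (teichmuller p (ϖ ^ m)⁻¹) * ι (teichmuller p ϖ) ^ m = 1 := by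
      rw [← map_pow, ← map_pow, ← map_mul, ← map_mul, inv_mul_cancel₀ (pow_ne_zero m hϖ0),
        map_one, map_one]
    rw [map_mul, ← RingHom.comp_apply, hw, ← mul_assoc, hunit, one_mul,
      mul_div_cancel_left₀ _ (pow_ne_zero k hp0)]

end PerfectField

theorem Bb_eq_closure_general {p : ℕ} [Fact p.Prime] {F : Type*} [Field F] [CharP F p]
    [PerfectRing F p] (v : Valuation F ℝ≥0)
    (ϖ : F) (hϖ0 : 0 < v ϖ) (hϖ1 : v ϖ < 1) :
    {y : FractionRing (WittVector p F) |
        ∃ (k : ℕ) (x : WittVector p F),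
          y = algebraMap (WittVector p F) (FractionRing (WittVector p F)) x /
                (p : FractionRing (WittVector p F)) ^ k ∧
          (∃ C : ℝ≥0, ∀ n : ℕ, v (teichCoeff p F x n) ≤ C)} =
      (Subring.closure
        (Set.range ((algebraMap (WittVector p F) (FractionRing (WittVector p F))).comp
            (WittVector.map v.integer.subtype)) ∪
          {(p : FractionRing (WittVector p F))⁻¹,
            (algebraMap (WittVector p F) (FractionRing (WittVector p F))
              (WittVector.teichmuller p ϖ))⁻¹}) : Set (FractionRing (WittVector p F))) := by
  have hϖ : ϖ ≠ 0 := v.pos_iff.1 hϖ0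
  have ht : algebraMap _ _ (WittVector.teichmuller p ϖ) ∈
      Set.range ((algebraMap (WittVector p F) (FractionRing (WittVector p F))).comp
        (WittVector.map v.integer.subtype)) :=
    ⟨WittVector.teichmuller p ⟨ϖ, (v.mem_integer_iff ϖ).2 hϖ1.le⟩, by
      simp [WittVector.map_teichmuller]⟩
  have ht0 : algebraMap (WittVector p F) (FractionRing (WittVector p F))
      (WittVector.teichmuller p ϖ) ≠ 0 :=
    (map_ne_zero_iff _ (IsFractionRing.injective _ _)).2 fun h =>
      hϖ (by simpa using congr_arg (WittVector.coeff · 0) h)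
  ext y
  rw [Set.union_insert, Set.union_singleton, SetLike.mem_coe, Set.mem_ofPred_eq,
    exists_bounded_teichCoeff_div_iff v hϖ hϖ1, Subring.mem_closure_insert_inv_iff
      (natCast_mem _ p) (WittVector.FractionRing.p_nonzero p F)]
  simp_rw [Subring.mem_closure_insert_inv_iff (Subring.subset_closure ht) ht0,
    ← RingHom.coe_range, Subring.closure_eq, SetLike.mem_coe]

/-- For any `ϖ ∈ F` with `0 < |ϖ| < 1`, the ring `B^b` (elements `x/p^k` of the
fraction field of `W(F)` with bounded Teichmüller coefficients) equals the subring
`W(O_F)[1/p, 1/[ϖ]]` of `W(F)[1/p]` generated by the image of `W(O_F)` together with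
`p⁻¹` and `[ϖ]⁻¹`; in particular this subring does not depend on the choice of `ϖ`. -/
theorem Bb_eq_closure {p : ℕ} [Fact p.Prime] {F : Type*} [Field F] [CharP F p]
    [PerfectRing F p] (v : Valuation F ℝ≥0)
    (hv : ∃ y : F, v y ≠ 0 ∧ v y ≠ 1)
    (ϖ : F) (hϖ0 : 0 < v ϖ) (hϖ1 : v ϖ < 1) :
    {y : FractionRing (WittVector p F) |
        ∃ (k : ℕ) (x : WittVector p F),
          y = algebraMap (WittVector p F) (FractionRing (WittVector p F)) x /
                (p : FractionRing (WittVector p F)) ^ k ∧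
          (∃ C : ℝ≥0, ∀ n : ℕ, v (teichCoeff p F x n) ≤ C)} =
      (Subring.closure
        (Set.range ((algebraMap (WittVector p F) (FractionRing (WittVector p F))).comp
            (WittVector.map v.integer.subtype)) ∪
          {(p : FractionRing (WittVector p F))⁻¹,
            (algebraMap (WittVector p F) (FractionRing (WittVector p F))
              (WittVector.teichmuller p ϖ))⁻¹}) : Set (FractionRing (WittVector p F))) :=
  Bb_eq_closure_general v ϖ hϖ0 hϖ1
end
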